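/- Let (C, v̂) be a b-bit randomized compression scheme for the ball B_d(c) with sup over v ∈ B_d(c) of MSE(v) ≤ γ² for some γ > 0. Then the 2^b points y_m = ∫ u dv̂(m)(u), for m ∈ M, form a γ-covering of B_d(c): for every v ∈ B_d(c) there exists m ∈ M with ‖y_m − v‖₂ ≤ γ. -/

import Mathlib

/-!
For every input `v` the MSE is an average, with the encoder's weights, of the mean squared
distances `∫ ‖u - v‖² d(dec m)(u)`, so some message `m` has mean squared distance at most the MSE,
hence at most `γ²`. By the bias–variance decomposition (Jensen for the square, coordinatewise),
the squared distance from `v` to the mean `y_m` of `dec m` is at most that mean squared distance.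
-/

open MeasureTheory Finset

/-- A `b`-bit randomized compression scheme for the Euclidean ball of radius `c`
in `ℝ^d`: a Markov-kernel encoder `enc` into the message set `Fin (2^b)` and a
Markov-kernel decoder `dec` producing probability distributions on `ℝ^d` with
finite second moment; encoder and decoder randomness are independent. -/
structure CompressionScheme (d b : ℕ) (c : ℝ) where
  enc : (Fin d → ℝ) → Fin (2 ^ b) → ℝ
  dec : Fin (2 ^ b) → Measure (Fin d → ℝ)
  enc_nonneg : ∀ v k, 0 ≤ enc v k
  enc_sum_one : ∀ v : Fin d → ℝ, Real.sqrt (∑ j, (v j) ^ 2) ≤ c → ∑ k, enc v k = 1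
  dec_prob : ∀ k, IsProbabilityMeasure (dec k)
  dec_sq_integrable : ∀ k, Integrable (fun u : Fin d → ℝ => ∑ j, (u j) ^ 2) (dec k)

/-- Mean squared error of a compression scheme at input `v`. -/
noncomputable def MSE {d b : ℕ} {c : ℝ} (A : CompressionScheme d b c)
    (v : Fin d → ℝ) : ℝ :=
  ∑ k, A.enc v k * ∫ u, (∑ j, (u j - v j) ^ 2) ∂(A.dec k)

variable {Ω ι : Type*} [Fintype ι]

lemma sq_integral_sub_le [MeasurableSpace Ω] {μ : Measure Ω} [IsProbabilityMeasure μ]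
    {X : Ω → ℝ} (hX : MemLp X 2 μ) (a : ℝ) :
    (∫ ω, X ω ∂μ - a) ^ 2 ≤ ∫ ω, (X ω - a) ^ 2 ∂μ := by
  have hXa : MemLp (fun ω => X ω - a) 2 μ := hX.sub (memLp_const a)
  have hmean : ∫ ω, (X ω - a) ∂μ = ∫ ω, X ω ∂μ - a := by
    rw [integral_sub (hX.integrable one_le_two) (integrable_const a), integral_const]
    simp
  have hvar := ProbabilityTheory.variance_eq_sub hXa
  simp only [Pi.pow_apply, hmean] at hvar
  linarith [ProbabilityTheory.variance_nonneg (fun ω => X ω - a) μ]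

lemma memLp_two_eval_of_integrable_sum_sq {μ : Measure (ι → ℝ)}
    (h : Integrable (fun u : ι → ℝ => ∑ j, u j ^ 2) μ) (j : ι) :
    MemLp (fun u : ι → ℝ => u j) 2 μ := by
  refine (memLp_two_iff_integrable_sq (measurable_pi_apply j).aestronglyMeasurable).2 ?_
  refine h.mono ((measurable_pi_apply j).pow_const 2).aestronglyMeasurable ?_
  filter_upwards with u
  rw [Real.norm_of_nonneg (sq_nonneg _),
    Real.norm_of_nonneg (sum_nonneg fun i _ => sq_nonneg (u i))]
  exact single_le_sum (fun i _ => sq_nonneg (u i)) (mem_univ j)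

lemma sum_sq_integral_sub_le {μ : Measure (ι → ℝ)} [IsProbabilityMeasure μ]
    (h : Integrable (fun u : ι → ℝ => ∑ j, u j ^ 2) μ) (v : ι → ℝ) :
    ∑ j, ((∫ u, u ∂μ) j - v j) ^ 2 ≤ ∫ u, ∑ j, (u j - v j) ^ 2 ∂μ := by
  have hL2 := memLp_two_eval_of_integrable_sum_sq h
  have hsq (j : ι) : Integrable (fun u : ι → ℝ => (u j - v j) ^ 2) μ :=
    ((hL2 j).sub (memLp_const (v j))).integrable_sq
  rw [integral_finsetSum _ fun j _ => hsq j]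
  refine sum_le_sum fun j _ => ?_
  rw [eval_integral fun i => (hL2 i).integrable one_le_two]
  exact sq_integral_sub_le (hL2 j) (v j)

lemma exists_le_sum_mul_of_sum_eq_one {w f : ι → ℝ} (hw₀ : ∀ i, 0 ≤ w i)
    (hw₁ : ∑ i, w i = 1) : ∃ i, f i ≤ ∑ i, w i * f i := by
  have hinf := inf_le_centerMass (s := univ) (f := f) (fun i _ => hw₀ i) (hw₁ ▸ one_pos)
  rw [centerMass_eq_of_sum_1 _ _ hw₁] at hinf
  obtain ⟨i, -, hi⟩ := exists_mem_eq_inf' (nonempty_of_sum_ne_zero (hw₁ ▸ one_ne_zero)) f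
  exact ⟨i, hi ▸ hinf⟩

/-- if a `b`-bit compression scheme for `B_d(c)` has worst-case MSE
at most `γ²` over the ball, then the decoder means `y_k = ∫ u d(dec k)(u)` form a
`γ`-covering of `B_d(c)`. -/
theorem compression_gives_covering (d b : ℕ) (c γ : ℝ) (hγ : 0 < γ)
    (A : CompressionScheme d b c)
    (hmse : ∀ v : Fin d → ℝ, Real.sqrt (∑ j, (v j) ^ 2) ≤ c → MSE A v ≤ γ ^ 2) :
    ∀ v : Fin d → ℝ, Real.sqrt (∑ j, (v j) ^ 2) ≤ c →
      ∃ k : Fin (2 ^ b),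
        Real.sqrt (∑ j, ((∫ u, u ∂(A.dec k)) j - v j) ^ 2) ≤ γ := by
  intro v hv
  obtain ⟨k, hk⟩ := exists_le_sum_mul_of_sum_eq_one
    (f := fun k => ∫ u, ∑ j, (u j - v j) ^ 2 ∂(A.dec k)) (A.enc_nonneg v) (A.enc_sum_one v hv)
  have := A.dec_prob k
  refine ⟨k, (Real.sqrt_le_left hγ.le).2 ?_⟩
  calc ∑ j, ((∫ u, u ∂(A.dec k)) j - v j) ^ 2
      ≤ ∫ u, ∑ j, (u j - v j) ^ 2 ∂(A.dec k) := sum_sq_integral_sub_le (A.dec_sq_integrable k) v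
    _ ≤ MSE A v := hk
    _ ≤ γ ^ 2 := hmse v hv
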